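/- arXiv:1511.05374 — 9 statements merged into one kernel-verified Lean document; each statement's English description precedes it below -/
import Mathlib

section
/- Let $1 \le p < \infty$, let $A_0, A_1$ be $m \times m$ complex matrices with $A_1 \neq 0$ satisfying $A_1 R(\lambda, A_0) A_1 = \phi(\lambda) A_1$ for $\lambda \notin \sigma(A_0)$, and let $A$ be the bounded operator on $X = \ell^p(\mathbb{Z}; \mathbb{C}^m)$ given by $A(x_k)_{k \in \mathbb{Z}} = (A_0 x_k + A_1 x_{k-1})_{k \in \mathbb{Z}}$. If $\lambda \notin \sigma(A_0)$ and $|\phi(\lambda)| = 1$, then $\lambda$ is not an eigenvalue of $A$. -/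
open scoped ENNReal

/-!
Write `R = (λ - A₀)⁻¹`. An eigenvector `x` satisfies `x_k = R A₁ x_{k-1}`, so `y_k = A₁ x_k`
satisfies `y_k = A₁ R A₁ x_{k-1} = φ(λ) y_{k-1}`; as `|φ(λ)| = 1`, `‖y_k‖` does not depend on `k`.
Since `p < ∞`, `x_k → 0` as `|k| → ∞`, hence `y_k → 0`, so `y = 0` and `x_k = R y_{k-1} = 0`.
-/

open Filter Topology Matrix

theorem Memℓp.tendsto_norm_cofinite_zero {α : Type*} {E : α → Type*}
    [∀ i, NormedAddCommGroup (E i)] {p : ℝ≥0∞} {f : ∀ i, E i} (hf : Memℓp f p) (hp : p ≠ ∞) :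
    Tendsto (fun i => ‖f i‖) cofinite (𝓝 0) := by
  rcases eq_zero_or_pos p with rfl | hp0
  · refine tendsto_const_nhds.congr' ?_
    filter_upwards [(memℓp_zero_iff.mp hf).eventually_cofinite_notMem] with i hi
    simp_all
  · have hq : 0 < p.toReal := ENNReal.toReal_pos hp0.ne' hp
    have h := (hf.summable hq).tendsto_cofinite_zero.rpow_const (p := p.toReal⁻¹)
      (Or.inr (inv_nonneg.mpr hq.le))
    rw [Real.zero_rpow (inv_ne_zero hq.ne')] at h
    exact h.congr fun i => Real.rpow_rpow_inv (norm_nonneg _) hq.ne'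

namespace Int

theorem norm_eq_norm_zero_of_forall_norm_eq_sub_one {E : Type*} [Norm E] {y : ℤ → E}
    (hy : ∀ k, ‖y k‖ = ‖y (k - 1)‖) (k : ℤ) : ‖y k‖ = ‖y 0‖ := by
  induction k using Int.induction_on with
  | zero => rfl
  | succ n ih => rw [hy, add_sub_cancel_right, ih]
  | pred n ih => rw [← ih, hy (-n)]

theorem eq_zero_of_forall_norm_eq_sub_one_of_tendsto {E : Type*} [NormedAddCommGroup E]
    {y : ℤ → E} (hy : ∀ k, ‖y k‖ = ‖y (k - 1)‖) (hlim : Tendsto y cofinite (𝓝 0)) : y = 0 := by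
  have hconst := norm_eq_norm_zero_of_forall_norm_eq_sub_one hy
  have hlim' := hlim.norm
  rw [norm_zero] at hlim'
  have h0 : ‖y 0‖ = 0 :=
    tendsto_nhds_unique (tendsto_const_nhds.congr fun k => (hconst k).symm) hlim'
  funext k
  rw [Pi.zero_apply, ← norm_eq_zero, hconst, h0]

end Int

theorem Matrix.eq_resolvent_mul_apply_of_add_eq_smul {𝕜 n : Type*} [RCLike 𝕜] [Fintype n]
    [DecidableEq n] {A₀ A₁ : Matrix n n 𝕜} {lam : 𝕜} (hlam : lam ∉ spectrum 𝕜 A₀)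
    {u v : EuclideanSpace 𝕜 n} (h : toEuclideanLin A₀ u + toEuclideanLin A₁ v = lam • u) :
    u = toEuclideanLin ((lam • 1 - A₀)⁻¹ * A₁) v := by
  set T := toEuclideanCLM (n := n) (𝕜 := 𝕜)
  change T A₀ u + T A₁ v = lam • u at h
  change u = T _ v
  have hunit : IsUnit (lam • 1 - A₀) := by
    simpa [Algebra.algebraMap_eq_smul_one] using spectrum.notMem_iff.mp hlam
  have hres : T (lam • 1 - A₀) u = T A₁ v := by
    rw [map_sub, map_smul, map_one, _root_.sub_apply, _root_.smul_apply, one_apply_eq_self, ← h,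
      add_sub_cancel_left]
  rw [map_mul, mul_apply_eq_comp, ← hres, ← mul_apply_eq_comp, ← map_mul,
    nonsing_inv_mul _ ((isUnit_iff_isUnit_det _).mp hunit), map_one, one_apply_eq_self]

theorem stmt_3_general (m : ℕ) (p : ℝ≥0∞) (hp2 : p ≠ ∞)
    (A₀ A₁ : Matrix (Fin m) (Fin m) ℂ)
    (φ : ℂ → ℂ)
    (hφ : ∀ lam : ℂ, lam ∉ spectrum ℂ A₀ →
      A₁ * (lam • (1 : Matrix (Fin m) (Fin m) ℂ) - A₀)⁻¹ * A₁ = φ lam • A₁)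
    (lam : ℂ) (hlam : lam ∉ spectrum ℂ A₀) (habs : ‖φ lam‖ = 1) :
    ∀ x : lp (fun _ : ℤ => EuclideanSpace ℂ (Fin m)) p,
      (∀ k : ℤ, Matrix.toEuclideanLin A₀ (x k) + Matrix.toEuclideanLin A₁ (x (k - 1))
          = lam • x k) → x = 0 := by
  intro x hx
  set T := toEuclideanCLM (n := Fin m) (𝕜 := ℂ)
  have hrec (k : ℤ) : x k = T ((lam • 1 - A₀)⁻¹ * A₁) (x (k - 1)) :=
    eq_resolvent_mul_apply_of_add_eq_smul hlam (hx k)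
  have hnorm (k : ℤ) : ‖T A₁ (x k)‖ = ‖T A₁ (x (k - 1))‖ := by
    rw [hrec k, ← mul_apply_eq_comp, ← map_mul, ← mul_assoc, hφ lam hlam, map_smul, _root_.smul_apply,
      norm_smul, habs, one_mul]
  have hlim : Tendsto (fun k => T A₁ (x k)) cofinite (𝓝 0) := by
    have hx0 := tendsto_zero_iff_norm_tendsto_zero.mpr
      ((lp.memℓp x).tendsto_norm_cofinite_zero hp2)
    have h := ((T A₁).continuous.tendsto 0).comp hx0
    rwa [map_zero] at h
  have hA₁x := congrFun (Int.eq_zero_of_forall_norm_eq_sub_one_of_tendsto hnorm hlim)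
  ext1; funext k
  rw [hrec k, map_mul, mul_apply_eq_comp, hA₁x, Pi.zero_apply, map_zero, lp.coeFn_zero,
    Pi.zero_apply]

/-- for `1 ≤ p < ∞`, points `λ ∉ σ(A₀)` with `|φ(λ)| = 1` are not
eigenvalues of the operator `A(x_k) = (A₀x_k + A₁x_{k-1})` on `ℓ^p(ℤ; ℂ^m)`. -/
theorem stmt_3 (m : ℕ) (p : ℝ≥0∞) (hp1 : 1 ≤ p) (hp2 : p ≠ ∞)
    (A₀ A₁ : Matrix (Fin m) (Fin m) ℂ) (hA₁ : A₁ ≠ 0)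
    (φ : ℂ → ℂ)
    (hφ : ∀ lam : ℂ, lam ∉ spectrum ℂ A₀ →
      A₁ * (lam • (1 : Matrix (Fin m) (Fin m) ℂ) - A₀)⁻¹ * A₁ = φ lam • A₁)
    (lam : ℂ) (hlam : lam ∉ spectrum ℂ A₀) (habs : ‖φ lam‖ = 1) :
    ∀ x : lp (fun _ : ℤ => EuclideanSpace ℂ (Fin m)) p,
      (∀ k : ℤ, Matrix.toEuclideanLin A₀ (x k) + Matrix.toEuclideanLin A₁ (x (k - 1))
          = lam • x k) → x = 0 :=
  stmt_3_general m p hp2 A₀ A₁ φ hφ lam hlam habs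
end

section
/- Let $A_0, A_1$ be $m \times m$ complex matrices with $A_1 \neq 0$ satisfying $A_1 R(\lambda, A_0) A_1 = \phi(\lambda) A_1$ for $\lambda \notin \sigma(A_0)$, and let $A$ be the bounded operator on $X = \ell^\infty(\mathbb{Z}; \mathbb{C}^m)$ given by $A(x_k) = (A_0 x_k + A_1 x_{k-1})$. If $\lambda \notin \sigma(A_0)$ and $|\phi(\lambda)| = 1$, then the kernel of $\lambda - A$ equals $\{ (\phi(\lambda)^k x_0)_{k \in \mathbb{Z}} : x_0 \in \operatorname{ran}(R(\lambda, A_0) A_1) \}$. -/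
open scoped ENNReal

/-!
Writing `M = λ - A₀`, `R = M⁻¹` and `B = A₁`, a sequence is in the kernel of `λ - A` iff
`x k = R B (x (k - 1))` for all `k`. The hypothesis on `φ` says `(R B)² = φ(λ) • R B`, so
applying `R B` once more gives `x (k + 1) = φ(λ) • x k`: the kernel consists of geometric
sequences with ratio `φ(λ) ≠ 0` starting in `ran (R B)`, and conversely every such sequence
solves the recurrence.
-/

theorem eq_zpow_smul_of_forall_add_one {G₀ α : Type*} [GroupWithZero G₀] [MulAction G₀ α]
    {c : G₀} (hc : c ≠ 0) {x : ℤ → α} (hx : ∀ k, x (k + 1) = c • x k) (k : ℤ) :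
    x k = c ^ k • x 0 := by
  induction k using Int.induction_on with
  | zero => simp
  | succ n ih => rw [hx, ih, smul_smul, add_comm, zpow_one_add₀ hc]
  | pred n ih =>
    calc x (-n - 1 : ℤ) = c⁻¹ • c • x (-n - 1) := (inv_smul_smul₀ hc _).symm
      _ = c⁻¹ • x (-n) := by rw [← hx, sub_add_cancel]
      _ = c ^ (-n - 1 : ℤ) • x 0 := by
        rw [ih, smul_smul, ← zpow_neg_one, ← zpow_add₀ hc, neg_add_eq_sub]

namespace Module.End

variable {K V : Type*} [Field K] [AddCommGroup V] [Module K V]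
  {M R B : Module.End K V} {c : K}

theorem mul_self_eq_smul_of_mul_mul_eq_smul (hB : B * R * B = c • B) :
    R * B * (R * B) = c • (R * B) := by
  rw [← mul_smul_comm, ← hB]
  simp only [mul_assoc]

theorem eq_zpow_smul_of_forall_apply_eq (hRM : R * M = 1) (hc : c ≠ 0)
    (hB : B * R * B = c • B) {x : ℤ → V} (hx : ∀ k, M (x k) = B (x (k - 1))) :
    ∃ x₀ ∈ LinearMap.range (R * B), ∀ k, x k = c ^ k • x₀ := by
  have hrec : ∀ k, x k = (R * B) (x (k - 1)) := fun k => by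
    rw [Module.End.mul_apply, ← hx, ← Module.End.mul_apply, hRM, Module.End.one_apply]
  have hstep : ∀ k, x (k + 1) = c • x k := fun k => by
    rw [hrec (k + 1), add_sub_cancel_right, hrec k, ← Module.End.mul_apply,
      mul_self_eq_smul_of_mul_mul_eq_smul hB, LinearMap.smul_apply]
  exact ⟨x 0, ⟨x (-1), by simpa using (hrec 0).symm⟩, eq_zpow_smul_of_forall_add_one hc hstep⟩

theorem apply_zpow_smul_eq (hMR : M * R = 1) (hc : c ≠ 0) (hB : B * R * B = c • B)
    {x₀ : V} (hx₀ : x₀ ∈ LinearMap.range (R * B)) (k : ℤ) :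
    M (c ^ k • x₀) = B (c ^ (k - 1) • x₀) := by
  obtain ⟨y, rfl⟩ := hx₀
  have hMx₀ : M ((R * B) y) = B y := by
    rw [← Module.End.mul_apply, ← mul_assoc, hMR, one_mul]
  have hBx₀ : B ((R * B) y) = c • B y := by
    rw [← Module.End.mul_apply, ← mul_assoc, hB, LinearMap.smul_apply]
  rw [map_smul, map_smul, hMx₀, hBx₀, smul_smul, ← zpow_add_one₀ hc, sub_add_cancel]

theorem forall_apply_eq_iff_exists_zpow_smul (hRM : R * M = 1) (hMR : M * R = 1) (hc : c ≠ 0)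
    (hB : B * R * B = c • B) (x : ℤ → V) :
    (∀ k, M (x k) = B (x (k - 1))) ↔ ∃ x₀ ∈ LinearMap.range (R * B), ∀ k, x k = c ^ k • x₀ :=
  ⟨eq_zpow_smul_of_forall_apply_eq hRM hc hB, fun ⟨x₀, hx₀, hx⟩ k => by
    rw [hx, hx, apply_zpow_smul_eq hMR hc hB hx₀]⟩

end Module.End

theorem stmt_4_general (m : ℕ)
    (A₀ A₁ : Matrix (Fin m) (Fin m) ℂ)
    (φ : ℂ → ℂ)
    (hφ : ∀ lam : ℂ, lam ∉ spectrum ℂ A₀ →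
      A₁ * (lam • (1 : Matrix (Fin m) (Fin m) ℂ) - A₀)⁻¹ * A₁ = φ lam • A₁)
    (lam : ℂ) (hlam : lam ∉ spectrum ℂ A₀) (habs : ‖φ lam‖ = 1) :
    ∀ x : lp (fun _ : ℤ => EuclideanSpace ℂ (Fin m)) ∞,
      (∀ k : ℤ, lam • x k - (Matrix.toEuclideanLin A₀ (x k)
          + Matrix.toEuclideanLin A₁ (x (k - 1))) = 0) ↔
        ∃ x₀ ∈ LinearMap.range
            (Matrix.toEuclideanLin ((lam • (1 : Matrix (Fin m) (Fin m) ℂ) - A₀)⁻¹ * A₁)),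
          ∀ k : ℤ, x k = φ lam ^ k • x₀ := by
  intro x
  set M := lam • (1 : Matrix (Fin m) (Fin m) ℂ) - A₀
  have hM : IsUnit M.det := (Matrix.isUnit_iff_isUnit_det M).mp <| by
    simpa [Algebra.algebraMap_eq_smul_one] using spectrum.notMem_iff.mp hlam
  have hmul (A B : Matrix (Fin m) (Fin m) ℂ) :
      Matrix.toEuclideanLin (A * B) = Matrix.toEuclideanLin A * Matrix.toEuclideanLin B :=
    map_mul (Matrix.toLpLinAlgEquiv 2) A B
  have hone : Matrix.toEuclideanLin (1 : Matrix (Fin m) (Fin m) ℂ) = 1 :=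
    map_one (Matrix.toLpLinAlgEquiv 2)
  have hMv (v : EuclideanSpace ℂ (Fin m)) :
      Matrix.toEuclideanLin M v = lam • v - Matrix.toEuclideanLin A₀ v := by
    simp [M, hone]
  have hφ₀ : φ lam ≠ 0 := norm_ne_zero_iff.mp (habs ▸ one_ne_zero)
  simp only [← sub_sub, sub_eq_zero, ← hMv, hmul]
  refine Module.End.forall_apply_eq_iff_exists_zpow_smul ?_ ?_ hφ₀ ?_ x
  · rw [← hmul, Matrix.nonsing_inv_mul M hM, hone]
  · rw [← hmul, Matrix.mul_nonsing_inv M hM, hone]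
  · rw [← hmul, ← hmul, hφ lam hlam, map_smul]

/-- on `ℓ^∞(ℤ; ℂ^m)`, for `λ ∉ σ(A₀)` with `|φ(λ)| = 1`, the kernel
of `λ - A` consists exactly of the sequences `(φ(λ)^k x₀)_k` with
`x₀ ∈ ran(R(λ,A₀) A₁)`. -/
theorem stmt_4 (m : ℕ)
    (A₀ A₁ : Matrix (Fin m) (Fin m) ℂ) (hA₁ : A₁ ≠ 0)
    (φ : ℂ → ℂ)
    (hφ : ∀ lam : ℂ, lam ∉ spectrum ℂ A₀ →
      A₁ * (lam • (1 : Matrix (Fin m) (Fin m) ℂ) - A₀)⁻¹ * A₁ = φ lam • A₁)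
    (lam : ℂ) (hlam : lam ∉ spectrum ℂ A₀) (habs : ‖φ lam‖ = 1) :
    ∀ x : lp (fun _ : ℤ => EuclideanSpace ℂ (Fin m)) ∞,
      (∀ k : ℤ, lam • x k - (Matrix.toEuclideanLin A₀ (x k)
          + Matrix.toEuclideanLin A₁ (x (k - 1))) = 0) ↔
        ∃ x₀ ∈ LinearMap.range
            (Matrix.toEuclideanLin ((lam • (1 : Matrix (Fin m) (Fin m) ℂ) - A₀)⁻¹ * A₁)),
          ∀ k : ℤ, x k = φ lam ^ k • x₀ :=
  stmt_4_general m A₀ A₁ φ hφ lam hlam habs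
end

section
/- Let $1 \le p \le \infty$, let $A_0, A_1$ be $m \times m$ complex matrices with $A_1 \neq 0$ satisfying $A_1 R(\lambda, A_0) A_1 = \phi(\lambda) A_1$ for $\lambda \notin \sigma(A_0)$, and let $A$ be the operator on $X = \ell^p(\mathbb{Z}; \mathbb{C}^m)$ given by $A(x_k) = (A_0 x_k + A_1 x_{k-1})$. If $\lambda \notin \sigma(A_0)$ and $|\phi(\lambda)| < 1$, then $\lambda - A$ is invertible in $\mathcal{B}(X)$, with inverse $R(\lambda) x = \big( R_\lambda x_k + R_\lambda A_1 R_\lambda \sum_{\ell=0}^{\infty} \phi(\lambda)^{\ell} x_{k-\ell-1} \big)_{k \in \mathbb{Z}}$, where $R_\lambda = R(\lambda, A_0)$. -/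
/-!
On `ℓ^p(ℤ; E)` write `λ - A = L - A₁ S`, where `L = λ - A₀` and `A₁` act coordinatewise and `S`
is the right shift, an isometry commuting with coordinatewise maps. Put
`G = S (1 - φ S)⁻¹ = ∑ φ^ℓ S^(ℓ+1)`, a Neumann series since `‖φ S‖ ≤ |φ| < 1`. Using
`A₁ R_λ A₁ = φ A₁`, the products of `L - A₁ S` with `R_λ + R_λ A₁ R_λ G` on either side reduce to
`1 + A₁ R_λ (G - S - φ S G)` and `1 + R_λ A₁ (G - S - φ G S)`, and both brackets vanish. Reading
off coordinates of `G x` gives the explicit formula.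
-/

open scoped ENNReal

section RingIdentities

variable {𝕜 R : Type*} [CommSemiring 𝕜] [Ring R] [Algebra 𝕜 R] {l r a s g : R} {c : 𝕜}

theorem sub_mul_mul_add_mul_eq_one (hlr : l * r = 1) (hara : a * r * a = c • a)
    (hsr : Commute s r) (hsa : Commute s a) (hg : (1 - c • s) * g = s) :
    (l - a * s) * (r + r * a * r * g) = 1 := by
  have hg' : g - s - c • (s * g) = 0 := by
    rw [← sub_eq_zero.mpr hg, sub_mul, one_mul, smul_mul_assoc, sub_right_comm]
  have hs : a * s * (r * a * r) * g = c • (a * r * (s * g)) := calc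
    a * s * (r * a * r) * g = (a * r * a) * r * (s * g) := by
      rw [mul_assoc a, ((hsr.mul_right hsa).mul_right hsr).eq]; noncomm_ring
    _ = c • (a * r * (s * g)) := by rw [hara, smul_mul_assoc, smul_mul_assoc]
  calc (l - a * s) * (r + r * a * r * g)
      = l * r * (1 + a * r * g) - a * (s * r) - a * s * (r * a * r) * g := by noncomm_ring
    _ = 1 + a * r * (g - s - c • (s * g)) := by
      rw [hlr, hs, hsr.eq, mul_sub, mul_sub, mul_smul_comm]
      noncomm_ring
    _ = 1 := by rw [hg', mul_zero, add_zero]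

theorem add_mul_mul_sub_mul_eq_one (hrl : r * l = 1) (hara : a * r * a = c • a)
    (hgl : Commute g l) (hga : Commute g a) (hg : g * (1 - c • s) = s) :
    (r + r * a * r * g) * (l - a * s) = 1 := by
  have hg' : g - s - c • (g * s) = 0 := by
    rw [← sub_eq_zero.mpr hg, mul_sub, mul_one, mul_smul_comm, sub_right_comm]
  have hl : r * a * r * g * l = r * a * g := by
    rw [mul_assoc, hgl.eq, ← mul_assoc, mul_assoc _ r l, hrl, mul_one]
  have ha : r * a * r * g * (a * s) = c • (r * a * (g * s)) := calc
    r * a * r * g * (a * s) = r * (a * r * a) * (g * s) := by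
      rw [← mul_assoc, mul_assoc _ g a, hga.eq]; noncomm_ring
    _ = c • (r * a * (g * s)) := by rw [hara, mul_smul_comm, smul_mul_assoc]
  calc (r + r * a * r * g) * (l - a * s)
      = r * l + r * a * r * g * l - r * a * s - r * a * r * g * (a * s) := by noncomm_ring
    _ = 1 + r * a * (g - s - c • (g * s)) := by
      rw [hrl, hl, ha, mul_sub, mul_sub, mul_smul_comm]
      noncomm_ring
    _ = 1 := by rw [hg', mul_zero, add_zero]

end RingIdentities

noncomputable section

variable {𝕜 α β E : Type*} [NontriviallyNormedField 𝕜] [NormedAddCommGroup E] {p : ℝ≥0∞}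

theorem Memℓp.comp_equiv {f : α → E} (hf : Memℓp f p) (e : β ≃ α) : Memℓp (f ∘ e) p := by
  obtain (rfl | rfl | hp) := p.trichotomy
  · rw [memℓp_zero_iff] at hf ⊢
    exact hf.preimage e.injective.injOn
  · rw [memℓp_infty_iff] at hf ⊢
    rwa [← e.surjective.range_comp (fun i => ‖f i‖)] at hf
  · rw [memℓp_gen_iff hp] at hf ⊢
    exact e.summable_iff.mpr hf

namespace lp

variable [NormedSpace 𝕜 E] [Fact (1 ≤ p)]

variable (𝕜 E p) in
def compEquivₗᵢ (e : β ≃ α) : lp (fun _ : α => E) p →ₗᵢ[𝕜] lp (fun _ : β => E) p where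
  toFun x := ⟨x ∘ e, (lp.memℓp x).comp_equiv e⟩
  map_add' _ _ := rfl
  map_smul' _ _ := rfl
  norm_map' x := by
    obtain (rfl | rfl | hp) := p.trichotomy
    · exact absurd (Fact.out : (1 : ℝ≥0∞) ≤ 0) (by simp)
    · exact e.iSup_comp (g := fun i => ‖x i‖)
    · rw [norm_eq_tsum_rpow hp, norm_eq_tsum_rpow hp]
      exact congrArg (· ^ (1 / p.toReal)) (e.tsum_eq (fun i => ‖x i‖ ^ p.toReal))

variable (α p) in
def constMapCLM (T : E →L[𝕜] E) : lp (fun _ : α => E) p →L[𝕜] lp (fun _ : α => E) p :=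
  mapCLM p (fun _ => T) (norm_nonneg T) fun _ => le_rfl

theorem constMapCLM_mul (T U : E →L[𝕜] E) :
    constMapCLM α p (T * U) = constMapCLM α p T * constMapCLM α p U := rfl

theorem constMapCLM_smul (c : 𝕜) (T : E →L[𝕜] E) :
    constMapCLM α p (c • T) = c • constMapCLM α p T := rfl

theorem constMapCLM_one : constMapCLM α p (1 : E →L[𝕜] E) = 1 := rfl

variable (𝕜 E p) in
def shift : lp (fun _ : ℤ => E) p →L[𝕜] lp (fun _ : ℤ => E) p :=
  (compEquivₗᵢ 𝕜 E p (Equiv.subRight 1)).toContinuousLinearMap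

theorem shift_pow_apply (n : ℕ) (x : lp (fun _ : ℤ => E) p) (k : ℤ) :
    (shift 𝕜 E p ^ n) x k = x (k - n) := by
  induction n generalizing k with
  | zero => simp
  | succ n ih =>
    rw [pow_succ']
    show (shift 𝕜 E p ^ n) x (k - 1) = _
    rw [ih, Nat.cast_succ, sub_sub, add_comm (1 : ℤ)]

theorem norm_shift_le : ‖shift 𝕜 E p‖ ≤ 1 :=
  LinearIsometry.norm_toContinuousLinearMap_le _

theorem commute_shift_constMapCLM (T : E →L[𝕜] E) :
    Commute (shift 𝕜 E p) (constMapCLM ℤ p T) := rfl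

theorem tsum_apply_apply {ι : Type*} {T : ι → lp (fun _ : α => E) p →L[𝕜] lp (fun _ : α => E) p}
    (hT : Summable T) (x : lp (fun _ : α => E) p) (i : α) :
    (∑' n, T n) x i = ∑' n, T n x i :=
  ((evalCLM 𝕜 (fun _ : α => E) p i).comp
    (ContinuousLinearMap.apply 𝕜 (lp (fun _ : α => E) p) x)).map_tsum hT

theorem constMapCLM_sub_mul_shift_apply (L A : E →L[𝕜] E) (x : lp (fun _ : ℤ => E) p) (k : ℤ) :
    ((constMapCLM ℤ p L - constMapCLM ℤ p A * shift 𝕜 E p) x) k = L (x k) - A (x (k - 1)) := rfl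

theorem norm_smul_shift_lt_one {c : 𝕜} (hc : ‖c‖ < 1) : ‖c • shift 𝕜 E p‖ < 1 := by
  calc ‖c • shift 𝕜 E p‖ ≤ ‖c‖ * ‖shift 𝕜 E p‖ := ContinuousLinearMap.opNorm_smul_le _ _
    _ ≤ ‖c‖ := mul_le_of_le_one_right (norm_nonneg c) norm_shift_le
    _ < 1 := hc

variable [CompleteSpace E]

theorem shift_mul_tsum_pow_apply {c : 𝕜} (hc : ‖c‖ < 1) (x : lp (fun _ : ℤ => E) p) (k : ℤ) :
    ((shift 𝕜 E p * ∑' n : ℕ, (c • shift 𝕜 E p) ^ n) x) k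
      = ∑' ℓ : ℕ, c ^ ℓ • x (k - ℓ - 1) := by
  change (∑' n : ℕ, (c • shift 𝕜 E p) ^ n) x (k - 1) = _
  have hsum : Summable fun n : ℕ => (c • shift 𝕜 E p) ^ n :=
    summable_geometric_of_norm_lt_one (norm_smul_shift_lt_one hc)
  rw [tsum_apply_apply hsum]
  refine tsum_congr fun ℓ => ?_
  rw [smul_pow, smul_apply, coeFn_smul, Pi.smul_apply, shift_pow_apply,
    sub_right_comm]

theorem exists_inverse_constMapCLM_sub_mul_shift (L r A : E →L[𝕜] E) {c : 𝕜}
    (hLr : L * r = 1) (hrL : r * L = 1) (hArA : A * r * A = c • A) (hc : ‖c‖ < 1) :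
    ∃ R : lp (fun _ : ℤ => E) p →L[𝕜] lp (fun _ : ℤ => E) p,
      (∀ x k, R x k = r (x k) + r (A (r (∑' ℓ : ℕ, c ^ ℓ • x (k - ℓ - 1))))) ∧
      (constMapCLM ℤ p L - constMapCLM ℤ p A * shift 𝕜 E p) * R = 1 ∧
      R * (constMapCLM ℤ p L - constMapCLM ℤ p A * shift 𝕜 E p) = 1 := by
  set s := shift 𝕜 E p
  set g := s * ∑' n : ℕ, (c • s) ^ n
  have hcs := norm_smul_shift_lt_one (E := E) (p := p) hc
  have hg_left : (1 - c • s) * g = s := by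
    rw [← mul_assoc, ← ((Commute.one_right s).sub_right ((Commute.refl s).smul_right c)).eq,
      mul_assoc, mul_neg_geom_series _ hcs, mul_one]
  have hg_right : g * (1 - c • s) = s := by rw [mul_assoc, geom_series_mul_neg _ hcs, mul_one]
  have hg_comm (T : E →L[𝕜] E) : Commute g (constMapCLM ℤ p T) :=
    (commute_shift_constMapCLM T).mul_left <| Commute.tsum_left _ fun n =>
      ((commute_shift_constMapCLM T).smul_left c).pow_left n
  have hArA' : constMapCLM ℤ p A * constMapCLM ℤ p r * constMapCLM ℤ p A
      = c • constMapCLM ℤ p A := by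
    rw [← constMapCLM_mul, ← constMapCLM_mul, hArA, constMapCLM_smul]
  refine ⟨constMapCLM ℤ p r + constMapCLM ℤ p r * constMapCLM ℤ p A * constMapCLM ℤ p r * g,
    fun x k => ?_, ?_, ?_⟩
  · change r (x k) + r (A (r ((g x) k))) = _
    rw [shift_mul_tsum_pow_apply hc]
  · refine sub_mul_mul_add_mul_eq_one ?_ hArA' (commute_shift_constMapCLM r)
      (commute_shift_constMapCLM A) hg_left
    rw [← constMapCLM_mul, hLr, constMapCLM_one]
  · refine add_mul_mul_sub_mul_eq_one ?_ hArA' (hg_comm L) (hg_comm A) hg_right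
    rw [← constMapCLM_mul, hrL, constMapCLM_one]

end lp

end

theorem stmt_5_general (m : ℕ) (p : ℝ≥0∞) [hp1 : Fact (1 ≤ p)]
    (A₀ A₁ : Matrix (Fin m) (Fin m) ℂ)
    (φ : ℂ → ℂ)
    (hφ : ∀ lam : ℂ, lam ∉ spectrum ℂ A₀ →
      A₁ * (lam • (1 : Matrix (Fin m) (Fin m) ℂ) - A₀)⁻¹ * A₁ = φ lam • A₁)
    (lam : ℂ) (hlam : lam ∉ spectrum ℂ A₀) (habs : ‖φ lam‖ < 1) :
    ∃ R : lp (fun _ : ℤ => EuclideanSpace ℂ (Fin m)) p →L[ℂ]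
        lp (fun _ : ℤ => EuclideanSpace ℂ (Fin m)) p,
      -- the explicit formula for the inverse
      (∀ x : lp (fun _ : ℤ => EuclideanSpace ℂ (Fin m)) p, ∀ k : ℤ,
        R x k = Matrix.toEuclideanLin (lam • (1 : Matrix (Fin m) (Fin m) ℂ) - A₀)⁻¹ (x k)
          + Matrix.toEuclideanLin
              ((lam • (1 : Matrix (Fin m) (Fin m) ℂ) - A₀)⁻¹ * A₁ *
                (lam • (1 : Matrix (Fin m) (Fin m) ℂ) - A₀)⁻¹)
              (∑' ℓ : ℕ, φ lam ^ ℓ • x (k - ℓ - 1))) ∧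
      -- (λ - A) ∘ R = I
      (∀ x : lp (fun _ : ℤ => EuclideanSpace ℂ (Fin m)) p, ∀ k : ℤ,
        lam • R x k - (Matrix.toEuclideanLin A₀ (R x k)
          + Matrix.toEuclideanLin A₁ (R x (k - 1))) = x k) ∧
      -- R ∘ (λ - A) = I
      (∀ x y : lp (fun _ : ℤ => EuclideanSpace ℂ (Fin m)) p,
        (∀ k : ℤ, y k = lam • x k - (Matrix.toEuclideanLin A₀ (x k)
          + Matrix.toEuclideanLin A₁ (x (k - 1)))) → R y = x) := by
  set M := lam • (1 : Matrix (Fin m) (Fin m) ℂ) - A₀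
  have hM : IsUnit M.det := by
    rw [spectrum.notMem_iff, Algebra.algebraMap_eq_smul_one] at hlam
    exact (Matrix.isUnit_iff_isUnit_det M).mp hlam
  let T := Matrix.toEuclideanCLM (n := Fin m) (𝕜 := ℂ)
  have hT (N : Matrix (Fin m) (Fin m) ℂ) v : Matrix.toEuclideanLin N v = T N v := rfl
  have hTM v : T M v = lam • v - T A₀ v := by simp [M, T, map_sub, map_smul]
  obtain ⟨R, hR, hright, hleft⟩ := lp.exists_inverse_constMapCLM_sub_mul_shift (p := p)
    (T M) (T M⁻¹) (T A₁) (c := φ lam)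
    (by rw [← map_mul, M.mul_nonsing_inv hM, map_one])
    (by rw [← map_mul, M.nonsing_inv_mul hM, map_one])
    (by rw [← map_mul, ← map_mul, hφ lam hlam, map_smul]) habs
  refine ⟨R, fun x k => ?_, fun x k => ?_, fun x y hy => ?_⟩
  · simp only [hT, hR, map_mul, mul_apply_eq_comp]
  · have := congr($hright x k)
    rwa [mul_apply_eq_comp, lp.constMapCLM_sub_mul_shift_apply, hTM, sub_sub] at this
  · have hxy : y = (lp.constMapCLM ℤ p (T M)
        - lp.constMapCLM ℤ p (T A₁) * lp.shift ℂ (EuclideanSpace ℂ (Fin m)) p) x := by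
      ext k
      rw [hy k, lp.constMapCLM_sub_mul_shift_apply, hTM, hT, hT, sub_sub]
    rw [hxy, ← mul_apply_eq_comp, hleft, one_apply_eq_self]

/-- if `λ ∉ σ(A₀)` and `|φ(λ)| < 1`, then `λ - A` is invertible in
`𝓑(ℓ^p(ℤ;ℂ^m))`, with inverse given by
`(R(λ)x)_k = R_λ x_k + R_λ A₁ R_λ ∑_{ℓ≥0} φ(λ)^ℓ x_{k-ℓ-1}`. -/
theorem stmt_5 (m : ℕ) (p : ℝ≥0∞) [hp1 : Fact (1 ≤ p)]
    (A₀ A₁ : Matrix (Fin m) (Fin m) ℂ) (hA₁ : A₁ ≠ 0)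
    (φ : ℂ → ℂ)
    (hφ : ∀ lam : ℂ, lam ∉ spectrum ℂ A₀ →
      A₁ * (lam • (1 : Matrix (Fin m) (Fin m) ℂ) - A₀)⁻¹ * A₁ = φ lam • A₁)
    (lam : ℂ) (hlam : lam ∉ spectrum ℂ A₀) (habs : ‖φ lam‖ < 1) :
    ∃ R : lp (fun _ : ℤ => EuclideanSpace ℂ (Fin m)) p →L[ℂ]
        lp (fun _ : ℤ => EuclideanSpace ℂ (Fin m)) p,
      -- the explicit formula for the inverse
      (∀ x : lp (fun _ : ℤ => EuclideanSpace ℂ (Fin m)) p, ∀ k : ℤ,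
        R x k = Matrix.toEuclideanLin (lam • (1 : Matrix (Fin m) (Fin m) ℂ) - A₀)⁻¹ (x k)
          + Matrix.toEuclideanLin
              ((lam • (1 : Matrix (Fin m) (Fin m) ℂ) - A₀)⁻¹ * A₁ *
                (lam • (1 : Matrix (Fin m) (Fin m) ℂ) - A₀)⁻¹)
              (∑' ℓ : ℕ, φ lam ^ ℓ • x (k - ℓ - 1))) ∧
      -- (λ - A) ∘ R = I
      (∀ x : lp (fun _ : ℤ => EuclideanSpace ℂ (Fin m)) p, ∀ k : ℤ,
        lam • R x k - (Matrix.toEuclideanLin A₀ (R x k)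
          + Matrix.toEuclideanLin A₁ (R x (k - 1))) = x k) ∧
      -- R ∘ (λ - A) = I
      (∀ x y : lp (fun _ : ℤ => EuclideanSpace ℂ (Fin m)) p,
        (∀ k : ℤ, y k = lam • x k - (Matrix.toEuclideanLin A₀ (x k)
          + Matrix.toEuclideanLin A₁ (x (k - 1)))) → R y = x) :=
  stmt_5_general m p (hp1 := hp1) A₀ A₁ φ hφ lam hlam habs
end

section
/- Let $1 < p < \infty$, let $A_0, A_1$ be $m \times m$ complex matrices with $A_1 \neq 0$ satisfying $A_1 R(\lambda, A_0) A_1 = \phi(\lambda) A_1$ for $\lambda \notin \sigma(A_0)$, and let $A$ be the operator on $X = \ell^p(\mathbb{Z}; \mathbb{C}^m)$ given by $A(x_k) = (A_0 x_k + A_1 x_{k-1})$. If $\lambda \notin \sigma(A_0)$ and $|\phi(\lambda)| = 1$, then the range of $\lambda - A$ is dense in $X$. -/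
/-!
Let `(A x)ₖ = T₀ xₖ + T₁ xₖ₋₁` on `ℓᵖ(ℤ; E)`, let `R` be a right inverse of `λ - T₀`, and let
`δₖ b` be the sequence with `b` at `k`. Modulo the range `S` of `λ - A` one has
`δₖ (λ b - T₀ b) ≡ δₖ₊₁ (T₁ b)`, so `δₖ v ≡ δₖ₊₁ w` with `w = T₁ R v`. Since `T₁ R w = ψ w`,
iterating gives `δₖ₊₁ w ≡ ψ ʲ δₖ₊₁₊ⱼ w` for every `j`, and averaging over `j < N` gives
`δₖ₊₁ w ≡ N⁻¹ ∑ⱼ ψ ʲ δₖ₊₁₊ⱼ w`, whose `ℓᵖ` norm is at most `N^(1/p - 1) ‖w‖ → 0` as `p > 1` and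
`‖ψ‖ ≤ 1`. Hence every `δₖ v` lies in the closure of `S`, and these span a dense subspace of `ℓᵖ`
for `p < ∞`. For matrices, `R = (λ - A₀)⁻¹` and `ψ = φ λ`.
-/

open scoped ENNReal
open Filter Topology

namespace lp

theorem dense_of_single_mem_topologicalClosure {α 𝕜 : Type*} {E : α → Type*} [DecidableEq α]
    [NormedRing 𝕜] [∀ i, NormedAddCommGroup (E i)] [∀ i, Module 𝕜 (E i)]
    [∀ i, IsBoundedSMul 𝕜 (E i)]
    {p : ℝ≥0∞} [Fact (1 ≤ p)] (hp : p ≠ ∞) (S : Submodule 𝕜 (lp E p))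
    (hS : ∀ i a, lp.single p i a ∈ S.topologicalClosure) : Dense (S : Set (lp E p)) := by
  refine Submodule.dense_iff_topologicalClosure_eq_top.mpr (eq_top_iff.mpr fun f _ => ?_)
  exact S.isClosed_topologicalClosure.mem_of_tendsto (lp.hasSum_single hp f)
    (Eventually.of_forall fun s => sum_mem fun i _ => hS i (f i))

variable {E : Type*} [NormedAddCommGroup E] {p : ℝ≥0∞}

theorem norm_rpow_sum_single_add (hp : 0 < p.toReal) (k : ℤ) (f : ℕ → E) (N : ℕ) :
    ‖∑ j ∈ Finset.range N, lp.single (E := fun _ : ℤ => E) p (k + j) (f j)‖ ^ p.toReal =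
      ∑ j ∈ Finset.range N, ‖f j‖ ^ p.toReal := by
  have hinj : Set.InjOn (fun j : ℕ => k + j) (Finset.range N) := fun a _ b _ h => by
    simpa using h
  have := lp.norm_sum_single (E := fun _ : ℤ => E) hp (fun i => f (i - k).toNat)
    ((Finset.range N).image fun j : ℕ => k + j)
  simpa only [Finset.sum_image hinj, add_sub_cancel_left, Int.toNat_natCast] using this

theorem norm_sum_single_add_le (hp : 0 < p.toReal) (k : ℤ) (f : ℕ → E) (N : ℕ) {C : ℝ}
    (hf : ∀ j, ‖f j‖ ≤ C) :
    ‖∑ j ∈ Finset.range N, lp.single (E := fun _ : ℤ => E) p (k + j) (f j)‖ ≤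
      (N : ℝ) ^ p.toReal⁻¹ * C := by
  have hC : 0 ≤ C := (norm_nonneg _).trans (hf 0)
  refine (Real.rpow_le_rpow_iff (lp.norm_nonneg' _) (by positivity) hp).mp ?_
  rw [norm_rpow_sum_single_add hp, Real.mul_rpow (by positivity) hC,
    ← Real.rpow_mul (Nat.cast_nonneg N), inv_mul_cancel₀ hp.ne', Real.rpow_one]
  calc ∑ j ∈ Finset.range N, ‖f j‖ ^ p.toReal
      ≤ ∑ _j ∈ Finset.range N, C ^ p.toReal := Finset.sum_le_sum fun j _ =>
        Real.rpow_le_rpow (norm_nonneg _) (hf j) hp.le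
    _ = N * C ^ p.toReal := by simp

end lp

section Bidiagonal

variable {𝕜 E : Type*} [RCLike 𝕜] [NormedAddCommGroup E] [NormedSpace 𝕜 E] (p : ℝ≥0∞)

def bidiagonalRange (lam : 𝕜) (T₀ T₁ : E →ₗ[𝕜] E) : Submodule 𝕜 (lp (fun _ : ℤ => E) p) where
  carrier := {y | ∃ x : lp (fun _ : ℤ => E) p,
    ∀ k : ℤ, y k = lam • x k - (T₀ (x k) + T₁ (x (k - 1)))}
  add_mem' := by
    rintro y y' ⟨x, hx⟩ ⟨x', hx'⟩
    refine ⟨x + x', fun k => ?_⟩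
    simp only [lp.coeFn_add, Pi.add_apply, hx, hx', map_add, smul_add]
    abel
  zero_mem' := ⟨0, fun k => by simp⟩
  smul_mem' := by
    rintro c y ⟨x, hx⟩
    refine ⟨c • x, fun k => ?_⟩
    simp only [lp.coeFn_smul, Pi.smul_apply, hx, map_smul, smul_sub, smul_add, smul_comm c lam]

variable {p} {lam : 𝕜} {T₀ T₁ : E →ₗ[𝕜] E}

theorem single_sub_single_mem_bidiagonalRange (k : ℤ) (a : E) :
    lp.single p k (lam • a - T₀ a) - lp.single p (k + 1) (T₁ a) ∈
      bidiagonalRange p lam T₀ T₁ := by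
  refine ⟨lp.single p k a, fun i => ?_⟩
  simp only [lp.coeFn_sub, Pi.sub_apply, lp.single_apply, Pi.single_apply]
  split_ifs <;> first | omega | simp_all

variable {R : E → E} {ψ : 𝕜} {w : E}

theorem single_sub_smul_pow_single_mem_bidiagonalRange
    (hR : ∀ b, lam • R b - T₀ (R b) = b) (hw : T₁ (R w) = ψ • w) (k : ℤ) (j : ℕ) :
    lp.single p k w - ψ ^ j • lp.single p (k + j) w ∈ bidiagonalRange p lam T₀ T₁ := by
  induction j with
  | zero => simp
  | succ j ih =>
    have hstep := single_sub_single_mem_bidiagonalRange (p := p) (lam := lam) (T₀ := T₀)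
      (T₁ := T₁) (k + j) (R w)
    rw [hR, hw, lp.single_smul] at hstep
    convert add_mem ih (Submodule.smul_mem _ (ψ ^ j) hstep) using 1
    rw [smul_sub, smul_smul, ← pow_succ, Nat.cast_succ, add_assoc]
    abel

theorem single_sub_average_mem_bidiagonalRange
    (hR : ∀ b, lam • R b - T₀ (R b) = b) (hw : T₁ (R w) = ψ • w) (k : ℤ) {N : ℕ} (hN : N ≠ 0) :
    lp.single p k w - (N : 𝕜)⁻¹ • ∑ j ∈ Finset.range N, lp.single p (k + j) (ψ ^ j • w) ∈
      bidiagonalRange p lam T₀ T₁ := by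
  have hsum := sum_mem fun j (_ : j ∈ Finset.range N) =>
    single_sub_smul_pow_single_mem_bidiagonalRange (p := p) hR hw k j
  convert Submodule.smul_mem _ (N : 𝕜)⁻¹ hsum using 1
  simp only [Finset.sum_sub_distrib, Finset.sum_const, Finset.card_range, lp.single_smul, smul_sub,
    ← Nat.cast_smul_eq_nsmul 𝕜, smul_smul, inv_mul_cancel₀ (Nat.cast_ne_zero.mpr hN : (N : 𝕜) ≠ 0),
    one_smul]

theorem tendsto_average_single_smul_pow [Fact (1 ≤ p)] (hp : 1 < p) (hp' : p ≠ ∞) (hψ : ‖ψ‖ ≤ 1)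
    (k : ℤ) (w : E) :
    Tendsto (fun N : ℕ => (N : 𝕜)⁻¹ •
      ∑ j ∈ Finset.range N, lp.single (E := fun _ : ℤ => E) p (k + j) (ψ ^ j • w))
      atTop (𝓝 0) := by
  have hq : 1 < p.toReal := by simpa using ENNReal.toReal_strict_mono hp' hp
  have hbound : ∀ᶠ N : ℕ in atTop,
      ‖(N : 𝕜)⁻¹ • ∑ j ∈ Finset.range N, lp.single (E := fun _ : ℤ => E) p (k + j) (ψ ^ j • w)‖ ≤
        (N : ℝ) ^ (p.toReal⁻¹ - 1) * ‖w‖ := by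
    filter_upwards [eventually_ne_atTop 0] with N hN
    have hterm : ∀ j, ‖ψ ^ j • w‖ ≤ ‖w‖ := fun j => by
      rw [norm_smul, norm_pow]
      exact mul_le_of_le_one_left (norm_nonneg w) (pow_le_one₀ (norm_nonneg ψ) hψ)
    calc _ = (N : ℝ)⁻¹ *
          ‖∑ j ∈ Finset.range N, lp.single (E := fun _ : ℤ => E) p (k + j) (ψ ^ j • w)‖ := by
          rw [norm_smul, norm_inv, RCLike.norm_natCast]
      _ ≤ (N : ℝ)⁻¹ * ((N : ℝ) ^ p.toReal⁻¹ * ‖w‖) := by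
          gcongr
          exact lp.norm_sum_single_add_le (by linarith) k (fun j => ψ ^ j • w) N hterm
      _ = (N : ℝ) ^ (p.toReal⁻¹ - 1) * ‖w‖ := by
          rw [Real.rpow_sub_one (Nat.cast_ne_zero.mpr hN)]
          ring
  have hdecay : Tendsto (fun N : ℕ => (N : ℝ) ^ (p.toReal⁻¹ - 1) * ‖w‖) atTop (𝓝 0) := by
    have h := (tendsto_rpow_neg_atTop (y := 1 - p.toReal⁻¹)
      (by linarith [inv_lt_one_of_one_lt₀ hq])).comp tendsto_natCast_atTop_atTop
    simpa only [neg_sub, zero_mul, Function.comp_def] using h.mul_const ‖w‖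
  exact squeeze_zero_norm' hbound hdecay

theorem single_mem_topologicalClosure_bidiagonalRange [Fact (1 ≤ p)] (hp : 1 < p) (hp' : p ≠ ∞)
    (hR : ∀ b, lam • R b - T₀ (R b) = b) (hw : T₁ (R w) = ψ • w) (hψ : ‖ψ‖ ≤ 1) (k : ℤ) :
    lp.single p k w ∈ (bidiagonalRange p lam T₀ T₁).topologicalClosure := by
  have h := tendsto_const_nhds (x := lp.single (E := fun _ : ℤ => E) p k w).sub
    (tendsto_average_single_smul_pow hp hp' hψ k w)
  rw [sub_zero] at h
  exact Submodule.isClosed_topologicalClosure _ |>.mem_of_tendsto h <|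
    (eventually_ne_atTop 0).mono fun N hN => Submodule.le_topologicalClosure _ <|
      single_sub_average_mem_bidiagonalRange hR hw k hN

theorem dense_bidiagonalRange [Fact (1 ≤ p)] (hp : 1 < p) (hp' : p ≠ ∞)
    (hR : ∀ b, lam • R b - T₀ (R b) = b) (hRT : ∀ b, T₁ (R (T₁ b)) = ψ • T₁ b) (hψ : ‖ψ‖ ≤ 1) :
    Dense (bidiagonalRange p lam T₀ T₁ : Set (lp (fun _ : ℤ => E) p)) := by
  refine lp.dense_of_single_mem_topologicalClosure hp' _ fun k v => ?_
  have hv := single_sub_single_mem_bidiagonalRange (p := p) (lam := lam) (T₀ := T₀) (T₁ := T₁)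
    k (R v)
  rw [hR] at hv
  have hw := single_mem_topologicalClosure_bidiagonalRange hp hp' hR (hRT (R v)) hψ (k + 1)
  simpa using add_mem (Submodule.le_topologicalClosure _ hv) hw

end Bidiagonal

theorem stmt_6_general (m : ℕ) (p : ℝ≥0∞) [Fact (1 ≤ p)] (hp1 : 1 < p) (hp2 : p ≠ ∞)
    (A₀ A₁ : Matrix (Fin m) (Fin m) ℂ)
    (φ : ℂ → ℂ)
    (hφ : ∀ lam : ℂ, lam ∉ spectrum ℂ A₀ →
      A₁ * (lam • (1 : Matrix (Fin m) (Fin m) ℂ) - A₀)⁻¹ * A₁ = φ lam • A₁)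
    (lam : ℂ) (hlam : lam ∉ spectrum ℂ A₀) (habs : ‖φ lam‖ = 1) :
    Dense {y : lp (fun _ : ℤ => EuclideanSpace ℂ (Fin m)) p |
      ∃ x : lp (fun _ : ℤ => EuclideanSpace ℂ (Fin m)) p,
        ∀ k : ℤ, y k = lam • x k - (Matrix.toEuclideanLin A₀ (x k)
          + Matrix.toEuclideanLin A₁ (x (k - 1)))} := by
  set M := lam • (1 : Matrix (Fin m) (Fin m) ℂ) - A₀
  have hM : M * M⁻¹ = 1 := Matrix.mul_nonsing_inv M <| (Matrix.isUnit_iff_isUnit_det M).mp <| by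
    simpa [Algebra.algebraMap_eq_smul_one] using spectrum.notMem_iff.mp hlam
  refine dense_bidiagonalRange (R := M⁻¹.toEuclideanLin) (ψ := φ lam) hp1 hp2 (fun b => ?_)
    (fun b => ?_) habs.le
  · simpa [M, Matrix.toLpLin_mul] using congr(Matrix.toEuclideanLin $hM b)
  · simpa [Matrix.toLpLin_mul] using congr(Matrix.toEuclideanLin $(hφ lam hlam) b)

/-- for `1 < p < ∞`, `λ ∉ σ(A₀)` with `|φ(λ)| = 1`, the range of
`λ - A` is dense in `ℓ^p(ℤ; ℂ^m)`. -/
theorem stmt_6 (m : ℕ) (p : ℝ≥0∞) [Fact (1 ≤ p)] (hp1 : 1 < p) (hp2 : p ≠ ∞)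
    (A₀ A₁ : Matrix (Fin m) (Fin m) ℂ) (hA₁ : A₁ ≠ 0)
    (φ : ℂ → ℂ)
    (hφ : ∀ lam : ℂ, lam ∉ spectrum ℂ A₀ →
      A₁ * (lam • (1 : Matrix (Fin m) (Fin m) ℂ) - A₀)⁻¹ * A₁ = φ lam • A₁)
    (lam : ℂ) (hlam : lam ∉ spectrum ℂ A₀) (habs : ‖φ lam‖ = 1) :
    Dense {y : lp (fun _ : ℤ => EuclideanSpace ℂ (Fin m)) p |
      ∃ x : lp (fun _ : ℤ => EuclideanSpace ℂ (Fin m)) p,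
        ∀ k : ℤ, y k = lam • x k - (Matrix.toEuclideanLin A₀ (x k)
          + Matrix.toEuclideanLin A₁ (x (k - 1)))} :=
  stmt_6_general m p hp1 hp2 A₀ A₁ φ hφ lam hlam habs
end

section
/- Let $A_0, A_1$ be $m \times m$ complex matrices with $A_1 \neq 0$ satisfying $A_1 R(\lambda, A_0) A_1 = \phi(\lambda) A_1$ for $\lambda \notin \sigma(A_0)$, and let $A$ be the operator on $X = \ell^\infty(\mathbb{Z}; \mathbb{C}^m)$ given by $A(x_k) = (A_0 x_k + A_1 x_{k-1})$. If $\lambda \notin \sigma(A_0)$, $|\phi(\lambda)| = 1$, and $y_0 \in \mathbb{C}^m$ satisfies $R_\lambda A_1 R_\lambda y_0 \neq 0$ where $R_\lambda = R(\lambda, A_0)$, then the element $y = (\phi(\lambda)^k y_0)_{k \in \mathbb{Z}}$ does not lie in the closure of the range of $\lambda - A$. -/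
open scoped ENNReal

/-! Put `R = R(λ, A₀)`, `F = R A₁ R` and `w = F y₀ ≠ 0`. Since `F (λ - A₀) = R A₁` and
`F A₁ = φ(λ) R A₁`, applying `F` to `((λ - A) x)ₖ` gives `uₖ - φ(λ) uₖ₋₁` with `u = R A₁ x`
bounded. Multiplying by `φ(λ)⁻ᵏ`, which has modulus one, an approximation of `y` by `(λ - A) x`
within `δ` makes `w` uniformly `‖F‖ δ`-close to the increments of the bounded sequence
`φ(λ)⁻ᵏ uₖ`. Telescoping `n` increments, `n ‖w‖ ≤ n ‖F‖ δ + O(1)`, so `‖w‖ ≤ ‖F‖ δ`. Thus the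
closed set `{z | ‖w‖ ≤ ‖F‖ dist(y, z)}` contains the range of `λ - A`, but not `y`. -/

theorem norm_le_of_forall_norm_sub_sub_le {E : Type*} [NormedAddCommGroup E] [NormedSpace ℝ E]
    {w : E} {v : ℕ → E} {C δ : ℝ} (hv : ∀ n, ‖v n‖ ≤ C)
    (h : ∀ n, ‖w - (v (n + 1) - v n)‖ ≤ δ) : ‖w‖ ≤ δ := by
  have htelescope (n : ℕ) : (n : ℝ) * ‖w‖ ≤ n * δ + 2 * C := by
    have hsum : n • w - (v n - v 0) = ∑ i ∈ Finset.range n, (w - (v (i + 1) - v i)) := by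
      rw [Finset.sum_sub_distrib, Finset.sum_range_sub, Finset.sum_const, Finset.card_range]
    calc (n : ℝ) * ‖w‖ = ‖n • w‖ := by rw [RCLike.norm_nsmul ℝ, nsmul_eq_mul]
      _ ≤ ‖n • w - (v n - v 0)‖ + (‖v n‖ + ‖v 0‖) := by
          refine (norm_le_norm_sub_add _ (v n - v 0)).trans ?_
          gcongr
          exact norm_sub_le _ _
      _ ≤ n * δ + 2 * C := by
          have := norm_sum_le_of_le (Finset.range n) (fun i _ => h i)
          rw [Finset.sum_const, Finset.card_range, nsmul_eq_mul, ← hsum] at this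
          linarith [hv n, hv 0]
  by_contra! hlt
  obtain ⟨n, hn⟩ := exists_nat_gt (2 * C / (‖w‖ - δ))
  rw [div_lt_iff₀ (by linarith)] at hn
  linarith [htelescope n]

section

variable {E : Type*} [NormedAddCommGroup E] [NormedSpace ℂ E]
  {A₀ A₁ R : E →L[ℂ] E} {lam c : ℂ}

theorem apply_lam_sub_shift_eq (hR : R * (lam • 1 - A₀) = 1) (hA : A₁ * R * A₁ = c • A₁)
    (x : ℤ → E) (k : ℤ) :
    (R * A₁ * R) (lam • x k - (A₀ (x k) + A₁ (x (k - 1))))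
      = (R * A₁) (x k) - c • (R * A₁) (x (k - 1)) := by
  have hleft (v : E) : (R * A₁ * R) (lam • v - A₀ v) = (R * A₁) v := by
    rw [show lam • v - A₀ v = (lam • 1 - A₀) v from rfl, ← mul_apply_eq_comp, mul_assoc, hR,
      mul_one]
  have hright (v : E) : (R * A₁ * R) (A₁ v) = c • (R * A₁) v := by
    rw [← mul_apply_eq_comp, mul_assoc R, mul_assoc R, hA, mul_smul_comm]; rfl
  rw [← sub_sub, map_sub, hleft, hright]

theorem norm_apply_le_of_forall_norm_sub_le (hR : R * (lam • 1 - A₀) = 1)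
    (hA : A₁ * R * A₁ = c • A₁) (hc : ‖c‖ = 1) {y₀ : E} {x : ℤ → E} {C δ : ℝ}
    (hx : ∀ k, ‖x k‖ ≤ C)
    (h : ∀ k, ‖c ^ k • y₀ - (lam • x k - (A₀ (x k) + A₁ (x (k - 1))))‖ ≤ δ) :
    ‖(R * A₁ * R) y₀‖ ≤ ‖R * A₁ * R‖ * δ := by
  have hc₀ : c ≠ 0 := norm_ne_zero_iff.mp (hc ▸ one_ne_zero)
  have hnorm_zpow (k : ℤ) : ‖c ^ k‖ = 1 := by rw [norm_zpow, hc, one_zpow]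
  set v : ℕ → E := fun n ↦ c ^ (-(n : ℤ)) • (R * A₁) (x n) with hv
  refine norm_le_of_forall_norm_sub_sub_le (v := v) (C := ‖R * A₁‖ * C) (fun n ↦ ?_) (fun n ↦ ?_)
  · rw [norm_smul, hnorm_zpow, one_mul]
    exact (R * A₁).le_opNorm_of_le (hx n)
  · set k : ℤ := n + 1
    have hstep : c ^ (-k) • (R * A₁ * R) (c ^ k • y₀ - (lam • x k - (A₀ (x k) + A₁ (x (k - 1)))))
        = (R * A₁ * R) y₀ - (v (n + 1) - v n) := by
      have hk : c ^ (-k) * c = c ^ (-(n : ℤ)) := by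
        rw [← zpow_add_one₀ hc₀]; congr 1; ring
      rw [map_sub, apply_lam_sub_shift_eq hR hA, map_smul, smul_sub, smul_smul, smul_sub,
        smul_smul, ← zpow_add₀ hc₀, neg_add_cancel, zpow_zero, one_smul, hk]
      simp only [hv, k, Nat.cast_succ, add_sub_cancel_right]
    rw [← hstep, norm_smul, hnorm_zpow, one_mul]
    exact (R * A₁ * R).le_opNorm_of_le (h k)

end

theorem stmt_7_general (m : ℕ)
    (A₀ A₁ : Matrix (Fin m) (Fin m) ℂ)
    (φ : ℂ → ℂ)
    (hφ : ∀ lam : ℂ, lam ∉ spectrum ℂ A₀ →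
      A₁ * (lam • (1 : Matrix (Fin m) (Fin m) ℂ) - A₀)⁻¹ * A₁ = φ lam • A₁)
    (lam : ℂ) (hlam : lam ∉ spectrum ℂ A₀) (habs : ‖φ lam‖ = 1)
    (y₀ : EuclideanSpace ℂ (Fin m))
    (hy₀ : Matrix.toEuclideanLin
        ((lam • (1 : Matrix (Fin m) (Fin m) ℂ) - A₀)⁻¹ * A₁ *
          (lam • (1 : Matrix (Fin m) (Fin m) ℂ) - A₀)⁻¹) y₀ ≠ 0)
    (y : lp (fun _ : ℤ => EuclideanSpace ℂ (Fin m)) ∞)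
    (hy : ∀ k : ℤ, y k = φ lam ^ k • y₀) :
    y ∉ closure {z : lp (fun _ : ℤ => EuclideanSpace ℂ (Fin m)) ∞ |
      ∃ x : lp (fun _ : ℤ => EuclideanSpace ℂ (Fin m)) ∞,
        ∀ k : ℤ, z k = lam • x k - (Matrix.toEuclideanLin A₀ (x k)
          + Matrix.toEuclideanLin A₁ (x (k - 1)))} := by
  set T := Matrix.toEuclideanCLM (n := Fin m) (𝕜 := ℂ)
  set M : Matrix (Fin m) (Fin m) ℂ := lam • 1 - A₀
  have hM : IsUnit M.det := by
    rw [← Matrix.isUnit_iff_isUnit_det, show M = algebraMap ℂ _ lam - A₀ by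
      rw [Algebra.algebraMap_eq_smul_one]]
    exact spectrum.notMem_iff.mp hlam
  have hR : T M⁻¹ * (lam • 1 - T A₀) = 1 := by
    rw [← map_one T, ← map_smul, ← map_sub, ← map_mul, Matrix.nonsing_inv_mul M hM]
  have hA : T A₁ * T M⁻¹ * T A₁ = φ lam • T A₁ := by
    rw [← map_mul, ← map_mul, hφ lam hlam, map_smul]
  set F := T M⁻¹ * T A₁ * T M⁻¹ with hF
  have hw : F y₀ ≠ 0 := by
    rwa [hF, ← map_mul, ← map_mul]
  have hclosed : IsClosed {z : lp (fun _ : ℤ => EuclideanSpace ℂ (Fin m)) ∞ |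
      ‖F y₀‖ ≤ ‖F‖ * dist y z} :=
    isClosed_le continuous_const (continuous_const.mul (continuous_const.dist continuous_id))
  refine fun hmem ↦ hw (norm_le_zero_iff.mp ?_)
  refine (closure_minimal ?_ hclosed hmem : ‖F y₀‖ ≤ ‖F‖ * dist y y).trans_eq (by simp)
  rintro z ⟨x, hx⟩
  refine norm_apply_le_of_forall_norm_sub_le hR hA habs (x := fun k ↦ x k)
    (fun k ↦ lp.norm_apply_le_norm ENNReal.top_ne_zero x k) (fun k ↦ ?_)
  rw [← hy k, dist_eq_norm]
  convert lp.norm_apply_le_norm ENNReal.top_ne_zero (y - z) k using 2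
  rw [lp.coeFn_sub, Pi.sub_apply, hx k]
  rfl

/-- on `ℓ^∞(ℤ;ℂ^m)`, for `λ ∉ σ(A₀)`, `|φ(λ)| = 1` and `y₀` with
`R_λ A₁ R_λ y₀ ≠ 0`, the element `y = (φ(λ)^k y₀)_k` is not in the closure of
the range of `λ - A`. -/
theorem stmt_7 (m : ℕ)
    (A₀ A₁ : Matrix (Fin m) (Fin m) ℂ) (hA₁ : A₁ ≠ 0)
    (φ : ℂ → ℂ)
    (hφ : ∀ lam : ℂ, lam ∉ spectrum ℂ A₀ →
      A₁ * (lam • (1 : Matrix (Fin m) (Fin m) ℂ) - A₀)⁻¹ * A₁ = φ lam • A₁)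
    (lam : ℂ) (hlam : lam ∉ spectrum ℂ A₀) (habs : ‖φ lam‖ = 1)
    (y₀ : EuclideanSpace ℂ (Fin m))
    (hy₀ : Matrix.toEuclideanLin
        ((lam • (1 : Matrix (Fin m) (Fin m) ℂ) - A₀)⁻¹ * A₁ *
          (lam • (1 : Matrix (Fin m) (Fin m) ℂ) - A₀)⁻¹) y₀ ≠ 0)
    (y : lp (fun _ : ℤ => EuclideanSpace ℂ (Fin m)) ∞)
    (hy : ∀ k : ℤ, y k = φ lam ^ k • y₀) :
    y ∉ closure {z : lp (fun _ : ℤ => EuclideanSpace ℂ (Fin m)) ∞ |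
      ∃ x : lp (fun _ : ℤ => EuclideanSpace ℂ (Fin m)) ∞,
        ∀ k : ℤ, z k = lam • x k - (Matrix.toEuclideanLin A₀ (x k)
          + Matrix.toEuclideanLin A₁ (x (k - 1)))} :=
  stmt_7_general m A₀ A₁ φ hφ lam hlam habs y₀ hy₀ y hy
end

section
/- Let $p$ and $q$ be coprime complex polynomials with all roots of $q$ in the open left half-plane $\{\operatorname{Re} \lambda < 0\}$, and set $\phi(\lambda) = p(\lambda)/q(\lambda)$. Suppose $|\phi(0)| = 1$, $|\phi(is)| < 1$ for all real $s \neq 0$, and $|\phi(\lambda)| \to 0$ as $|\lambda| \to \infty$. Then there exists an even integer $n \ge 2$ and constants $c, C, \delta > 0$ such that $c |s|^n \le 1 - |\phi(is)| \le C |s|^n$ for all real $s$ with $0 < |s| \le \delta$. -/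
/-!
On the imaginary axis, `1 - |φ(is)| = r(s) / (|q(is)| (|q(is)| + |p(is)|))` with
`r(s) = |q(is)|² - |p(is)|²`, and `r` is a real polynomial in `s`. It vanishes at `0` and is
positive elsewhere, so `r(s) = s^n b(s)` with `b(0) > 0` and `n ≥ 2` even; the remaining
factor `b(s) / (|q(is)| (|q(is)| + |p(is)|))` is continuous and positive at `0`, hence pinched
between two positive constants near `0`.
-/

open Polynomial Complex

theorem even_and_pos_of_pow_mul_pos {g : ℝ → ℝ} {n : ℕ} (hg : ContinuousAt g 0) (hg0 : g 0 ≠ 0)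
    (hpos : ∀ s ≠ 0, 0 < s ^ n * g s) : Even n ∧ 0 < g 0 := by
  obtain ⟨ε, hε, hsign⟩ := Metric.eventually_nhds_iff.1 <|
    (hg.mul continuousAt_const).eventually (lt_mem_nhds (mul_self_pos.2 hg0))
  have hsmall : ∀ s : ℝ, |s| = ε / 2 → s ≠ 0 ∧ 0 < g s * g 0 := fun s hs =>
    ⟨abs_pos.1 (by linarith), hsign (by rw [Real.dist_eq, sub_zero]; linarith)⟩
  obtain ⟨hε_ne, hε_sign⟩ := hsmall (ε / 2) (abs_of_pos (by positivity))
  have hg_pos : 0 < g (ε / 2) := pos_of_mul_pos_right (hpos _ hε_ne) (by positivity)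
  have hg0_pos : 0 < g 0 := pos_of_mul_pos_right hε_sign hg_pos.le
  obtain ⟨hneg_ne, hneg_sign⟩ := hsmall (-(ε / 2)) (by rw [abs_neg, abs_of_pos (by positivity)])
  have hpow_pos : 0 < (-(ε / 2)) ^ n :=
    pos_of_mul_pos_left (hpos _ hneg_ne) (pos_of_mul_pos_left hneg_sign hg0_pos.le).le
  refine ⟨?_, hg0_pos⟩
  by_contra hodd
  exact (Nat.not_even_iff_odd.1 hodd).pow_neg (by linarith : -(ε / 2) < 0) |>.not_gt hpow_pos

theorem exists_pos_bounds_of_continuousAt {X : Type*} [PseudoMetricSpace X] {h : X → ℝ} {x : X}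
    (hh : ContinuousAt h x) (hx : 0 < h x) :
    ∃ c C δ : ℝ, 0 < c ∧ 0 < C ∧ 0 < δ ∧ ∀ y, dist y x ≤ δ → c ≤ h y ∧ h y ≤ C := by
  obtain ⟨ε, hε, hball⟩ := Metric.eventually_nhds_iff.1 <|
    (hh.eventually (lt_mem_nhds (half_lt_self hx))).and
      (hh.eventually (gt_mem_nhds (lt_two_mul_self hx)))
  refine ⟨h x / 2, 2 * h x, ε / 2, by positivity, by positivity, by positivity, fun y hy => ?_⟩
  obtain ⟨hlo, hhi⟩ := hball (by linarith : dist y x < ε)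
  exact ⟨hlo.le, hhi.le⟩

theorem one_sub_norm_div_eq {𝕜 : Type*} [NormedDivisionRing 𝕜] {a b : 𝕜} (hb : b ≠ 0) :
    1 - ‖a / b‖ = (‖b‖ ^ 2 - ‖a‖ ^ 2) / (‖b‖ * (‖b‖ + ‖a‖)) := by
  have hb' : 0 < ‖b‖ := norm_pos_iff.2 hb
  rw [norm_div]
  field_simp
  ring

namespace Polynomial

theorem eval_ofReal_map_conj (Q : ℂ[X]) (s : ℝ) :
    (Q.map (starRingEnd ℂ)).eval (s : ℂ) = starRingEnd ℂ (Q.eval (s : ℂ)) := by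
  rw [eval_map, ← eval₂_at_apply, conj_ofReal]

theorem exists_map_ofReal_eq_of_map_conj_eq {A : ℂ[X]} (hA : A.map (starRingEnd ℂ) = A) :
    ∃ R : ℝ[X], R.map ofRealHom = A := by
  refine (lifts_iff_coeff_lifts A).2 fun k => ⟨(A.coeff k).re, ?_⟩
  rw [ofRealHom_eq_coe, conj_eq_iff_re.1 (by rw [← coeff_map, hA])]

/-- `R` is `Q Q̄ - P P̄`, which is self-conjugate and hence has real coefficients. -/
theorem exists_eval_eq_norm_sq_sub_norm_sq (P Q : ℂ[X]) :
    ∃ R : ℝ[X], ∀ s : ℝ, R.eval s = ‖Q.eval (s : ℂ)‖ ^ 2 - ‖P.eval (s : ℂ)‖ ^ 2 := by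
  set A := Q * Q.map (starRingEnd ℂ) - P * P.map (starRingEnd ℂ)
  have hA : A.map (starRingEnd ℂ) = A := by
    simp only [A, Polynomial.map_sub, Polynomial.map_mul, map_map, RingHomCompTriple.comp_eq,
      Polynomial.map_id]
    ring
  obtain ⟨R, hR⟩ := exists_map_ofReal_eq_of_map_conj_eq hA
  refine ⟨R, fun s => ofReal_injective ?_⟩
  rw [← ofRealHom_eq_coe, ← eval₂_at_apply, ← eval_map, hR, ofRealHom_eq_coe]
  simp only [A, eval_sub, eval_mul, eval_ofReal_map_conj, mul_conj, normSq_eq_norm_sq]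
  push_cast
  ring

theorem exists_even_pow_mul_of_eval_pos {R : ℝ[X]} (hR0 : R.eval 0 = 0)
    (hpos : ∀ s ≠ 0, 0 < R.eval s) :
    ∃ (n : ℕ) (B : ℝ[X]), Even n ∧ 2 ≤ n ∧ 0 < B.eval 0 ∧ ∀ s, R.eval s = s ^ n * B.eval s := by
  have hR : R ≠ 0 := fun h => by simpa [h] using hpos 1 one_ne_zero
  set n := R.rootMultiplicity 0
  set B := R /ₘ (X - C 0) ^ n
  have hfactor : ∀ s, R.eval s = s ^ n * B.eval s := fun s => by
    conv_lhs => rw [← pow_mul_divByMonic_rootMultiplicity_eq R 0]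
    rw [eval_mul, eval_pow, eval_sub, eval_X, eval_C, sub_zero]
  obtain ⟨heven, hB0⟩ := even_and_pos_of_pow_mul_pos B.continuous.continuousAt
    (eval_divByMonic_pow_rootMultiplicity_ne_zero 0 hR) fun s hs => hfactor s ▸ hpos s hs
  have hn : 0 < n := (rootMultiplicity_pos hR).2 hR0
  exact ⟨n, B, heven, by obtain ⟨k, hk⟩ := heven; omega, hB0, hfactor⟩

end Polynomial

theorem stmt_8_general (p q : Polynomial ℂ)
    (hq : ∀ z : ℂ, q.eval z = 0 → z.re < 0)
    (φ : ℂ → ℂ) (hφ : ∀ z : ℂ, φ z = p.eval z / q.eval z)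
    (h0 : ‖φ 0‖ = 1)
    (hlt : ∀ s : ℝ, s ≠ 0 → ‖φ (Complex.I * s)‖ < 1) :
    ∃ (n : ℕ) (c C δ : ℝ), Even n ∧ 2 ≤ n ∧ 0 < c ∧ 0 < C ∧ 0 < δ ∧
      ∀ s : ℝ, 0 < |s| → |s| ≤ δ →
        c * |s| ^ n ≤ 1 - ‖φ (Complex.I * s)‖ ∧
        1 - ‖φ (Complex.I * s)‖ ≤ C * |s| ^ n := by
  set P := p.comp (C I * X)
  set Q := q.comp (C I * X)
  have hφPQ : ∀ s : ℝ, φ (I * s) = P.eval (s : ℂ) / Q.eval (s : ℂ) := by simp [P, Q, hφ]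
  have hQ : ∀ s : ℝ, Q.eval (s : ℂ) ≠ 0 := fun s h =>
    (hq _ (by simpa [Q] using h)).ne (by simp)
  set D : ℝ → ℝ := fun s => ‖Q.eval (s : ℂ)‖ * (‖Q.eval (s : ℂ)‖ + ‖P.eval (s : ℂ)‖)
  have hD : ∀ s, 0 < D s := fun s => by have := norm_pos_iff.2 (hQ s); positivity
  obtain ⟨R, hR⟩ := exists_eval_eq_norm_sq_sub_norm_sq P Q
  have hgap : ∀ s : ℝ, 1 - ‖φ (I * s)‖ = R.eval s / D s := fun s => by
    rw [hφPQ, one_sub_norm_div_eq (hQ s), hR]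
  have hR0 : R.eval 0 = 0 := by
    have h := hgap 0
    rw [ofReal_zero, mul_zero, h0, sub_self, eq_comm, div_eq_zero_iff] at h
    exact h.resolve_right (hD 0).ne'
  have hRpos : ∀ s ≠ 0, 0 < R.eval s := fun s hs => by
    have h := sub_pos.2 (hlt s hs)
    rwa [hgap, div_pos_iff_of_pos_right (hD s)] at h
  obtain ⟨n, B, heven, hn, hB0, hRB⟩ := exists_even_pow_mul_of_eval_pos hR0 hRpos
  have hDcont : ContinuousAt D 0 := by fun_prop
  obtain ⟨c, C, δ, hc, hC, hδ, hbounds⟩ := exists_pos_bounds_of_continuousAt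
    (h := fun s => B.eval s / D s) (B.continuous.continuousAt.div hDcont (hD 0).ne')
    (div_pos hB0 (hD 0))
  refine ⟨n, c, C, δ, heven, hn, hc, hC, hδ, fun s _ hsδ => ?_⟩
  obtain ⟨hlo, hhi⟩ := hbounds s (by rwa [Real.dist_0_eq_abs])
  rw [hgap, hRB, ← heven.pow_abs s, mul_div_assoc, mul_comm c, mul_comm C]
  exact ⟨mul_le_mul_of_nonneg_left hlo (by positivity),
    mul_le_mul_of_nonneg_left hhi (by positivity)⟩

/-- Lemma 2.4: if `φ = p/q` with `p, q` coprime, all roots of `q`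
in the open left half-plane, `|φ(0)| = 1`, `|φ(is)| < 1` for real `s ≠ 0`, and
`|φ(λ)| → 0` as `|λ| → ∞`, then there is an even `n ≥ 2` with
`1 - |φ(is)| ≍ |s|^n` as `s → 0`. -/
theorem stmt_8 (p q : Polynomial ℂ) (hcop : IsCoprime p q)
    (hq : ∀ z : ℂ, q.eval z = 0 → z.re < 0)
    (φ : ℂ → ℂ) (hφ : ∀ z : ℂ, φ z = p.eval z / q.eval z)
    (h0 : ‖φ 0‖ = 1)
    (hlt : ∀ s : ℝ, s ≠ 0 → ‖φ (Complex.I * s)‖ < 1)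
    (hinf : Filter.Tendsto (fun z : ℂ => ‖φ z‖) (Bornology.cobounded ℂ) (nhds 0)) :
    ∃ (n : ℕ) (c C δ : ℝ), Even n ∧ 2 ≤ n ∧ 0 < c ∧ 0 < C ∧ 0 < δ ∧
      ∀ s : ℝ, 0 < |s| → |s| ≤ δ →
        c * |s| ^ n ≤ 1 - ‖φ (Complex.I * s)‖ ∧
        1 - ‖φ (Complex.I * s)‖ ≤ C * |s| ^ n :=
  stmt_8_general p q hq φ hφ h0 hlt
end

section
/- Let $\zeta > 0$ and $k \ge 1$ an integer, and define $\phi(\lambda) = \zeta^k / (\lambda + \zeta)^k$ for $\lambda \neq -\zeta$. Then $\sup_{0 < \lambda \le 1} \lambda / (1 - |\phi(\lambda)|) < \infty$. -/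
/-! With `r = ζ / (λ + ζ) ∈ (0, 1)` we have `|φ(λ)| = r ^ k ≤ r`, so
`λ / (1 - |φ(λ)|) ≤ λ / (1 - r) = λ + ζ ≤ 1 + ζ`. -/

lemma div_one_sub_pow_le_div_one_sub {x r : ℝ} (hx : 0 ≤ x) (hr₀ : 0 ≤ r) (hr₁ : r < 1)
    {k : ℕ} (hk : k ≠ 0) : x / (1 - r ^ k) ≤ x / (1 - r) :=
  div_le_div_of_nonneg_left hx (sub_pos.2 hr₁) (sub_le_sub_left (pow_le_of_le_one hr₀ hr₁.le hk) 1)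

lemma div_one_sub_abs_div_add_pow_le {ζ lam : ℝ} (hζ : 0 < ζ) (hlam : 0 < lam) {k : ℕ}
    (hk : k ≠ 0) : lam / (1 - |ζ ^ k / (lam + ζ) ^ k|) ≤ lam + ζ := by
  have hs : 0 < lam + ζ := by linarith
  have hr₁ : ζ / (lam + ζ) < 1 := (div_lt_one hs).2 (by linarith)
  rw [← div_pow, abs_of_pos (pow_pos (div_pos hζ hs) k)]
  calc lam / (1 - (ζ / (lam + ζ)) ^ k) ≤ lam / (1 - ζ / (lam + ζ)) :=
        div_one_sub_pow_le_div_one_sub hlam.le (div_pos hζ hs).le hr₁ hk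
    _ = lam + ζ := by rw [one_sub_div hs.ne', add_sub_cancel_right, div_div_cancel₀ hlam.ne']

/-- for `φ(λ) = ζ^k/(λ+ζ)^k`, the quantity `λ/(1-|φ(λ)|)` is
bounded on `(0,1]`. -/
theorem stmt_10 (ζ : ℝ) (hζ : 0 < ζ) (k : ℕ) (hk : 1 ≤ k) :
    ∃ M : ℝ, ∀ lam : ℝ, 0 < lam → lam ≤ 1 →
      lam / (1 - |ζ ^ k / (lam + ζ) ^ k|) ≤ M :=
  ⟨1 + ζ, fun lam hlam hlam₁ =>
    (div_one_sub_abs_div_add_pow_le hζ hlam (Nat.one_le_iff_ne_zero.mp hk)).trans (by linarith)⟩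
end

section
/- Let $\zeta > 0$ and $k \ge 1$ an integer, and define $\phi(\lambda) = \zeta^k / (\lambda + \zeta)^k$ for $\lambda > 0$. Then for every integer $n \ge 1$ and every $\lambda > 0$, $\frac{\lambda^{n+1}}{n!} \sum_{\ell = 1}^{\infty} \left| \frac{d^n}{d\lambda^n} \phi(\lambda)^{\ell} \right| \le \zeta$. -/
/-!
Writing `ℓ`-th powers as `φ(λ)^ℓ = ζ^m / (λ + ζ)^m` with `m = kℓ`, the `n`-th derivative has
absolute value `ζ^m m^(n) / (λ + ζ)^(m + n)`, where `m^(n) = m(m+1)⋯(m+n-1)`. These are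
nonnegative terms of the series over all `m ≥ 1`, which the negative binomial series
`∑ m^(n) r^m = n! r / (1 - r)^(n+1)` at `r = ζ / (λ + ζ)` sums to exactly `n! ζ / λ^(n+1)`.
-/

open Finset Nat

lemma iteratedDeriv_inv_pow_add (m n : ℕ) (c x : ℝ) :
    iteratedDeriv n (fun y => ((y + c) ^ m)⁻¹) x
      = (-1) ^ n * m.ascFactorial n / (x + c) ^ (m + n) := by
  have hzpow : (fun y => ((y + c) ^ m)⁻¹) = fun y => (y + c) ^ (-(m : ℤ)) := by
    funext y
    rw [zpow_neg, zpow_natCast]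
  have hsign : ∏ i ∈ range n, (((-m : ℤ) : ℝ) - i) = (-1) ^ n * m.ascFactorial n := by
    calc ∏ i ∈ range n, (((-m : ℤ) : ℝ) - i) = ∏ i ∈ range n, -((m + i : ℕ) : ℝ) :=
          prod_congr rfl fun i _ => by push_cast; ring
      _ = (-1) ^ n * m.ascFactorial n := by
          rw [prod_neg, card_range, ← cast_prod, ← ascFactorial_eq_prod_range]
  rw [hzpow, congrFun (iteratedDeriv_comp_add_const n (fun z : ℝ => z ^ (-(m : ℤ))) c) x,
    iteratedDeriv_eq_iterate, iter_deriv_zpow, hsign, div_eq_mul_inv, ← zpow_natCast (x + c),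
    ← zpow_neg, Nat.cast_add, neg_add']

lemma hasSum_ascFactorial_mul_geometric {𝕜 : Type*} [NormedField 𝕜] [CompleteSpace 𝕜]
    (n : ℕ) {r : 𝕜} (hr : ‖r‖ < 1) :
    HasSum (fun i : ℕ => ((i + 1).ascFactorial n : 𝕜) * r ^ (i + 1))
      (n ! * r / (1 - r) ^ (n + 1)) := by
  have hterm : (fun i : ℕ => ((i + 1).ascFactorial n : 𝕜) * r ^ (i + 1))
      = fun i => n ! * r * ((i + n).choose n * r ^ i) := by
    funext i
    rw [ascFactorial_eq_factorial_mul_choose]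
    push_cast
    ring
  rw [hterm, ← mul_one_div]
  exact (hasSum_choose_mul_geometric_of_norm_lt_one n hr).mul_left _

lemma tsum_comp_mul_succ_le {f : ℕ → ℝ} (hf : Summable fun i => f (i + 1))
    (hf0 : ∀ i, 0 ≤ f i) {k : ℕ} (hk : 1 ≤ k) :
    ∑' j, f (k * (j + 1)) ≤ ∑' i, f (i + 1) := by
  have hinj : Function.Injective fun j => k * j + (k - 1) := by
    intro a b hab
    simpa [Nat.pos_iff_ne_zero.mp hk] using hab
  convert tsum_comp_le_tsum_of_inj hf (fun i => hf0 _) hinj using 3 with j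
  simp only [Function.comp_apply]
  congr 1
  rw [mul_add, mul_one]
  omega

lemma abs_iteratedDeriv_pow_div_add_pow (m n : ℕ) {c x : ℝ} (hc : 0 ≤ c) (hx : 0 < x + c) :
    |iteratedDeriv n (fun y => c ^ m / (y + c) ^ m) x|
      = c ^ m * m.ascFactorial n / (x + c) ^ (m + n) := by
  simp only [div_eq_mul_inv, iteratedDeriv_const_mul_field, iteratedDeriv_inv_pow_add]
  rw [abs_mul, abs_mul, abs_mul, abs_neg_one_pow, one_mul, Nat.abs_cast, abs_inv,
    abs_of_nonneg (pow_nonneg hc m), abs_of_pos (pow_pos hx _), mul_assoc]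

lemma hasSum_pow_mul_ascFactorial_div_add_pow (n : ℕ) {c x : ℝ} (hc : 0 < c) (hx : 0 < x) :
    HasSum (fun i : ℕ => c ^ (i + 1) * (i + 1).ascFactorial n / (x + c) ^ (i + 1 + n))
      (n ! * c / x ^ (n + 1)) := by
  have hxc : 0 < x + c := by linarith
  have hr : ‖c / (x + c)‖ < 1 := by
    rw [Real.norm_of_nonneg (by positivity), div_lt_one hxc]
    linarith
  have hval : ((x + c) ^ n)⁻¹ * (n ! * (c / (x + c)) / (1 - c / (x + c)) ^ (n + 1))
      = n ! * c / x ^ (n + 1) := by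
    rw [one_sub_div hxc.ne', add_sub_cancel_right, div_pow]
    field_simp
    ring
  rw [← hval]
  refine ((hasSum_ascFactorial_mul_geometric n hr).mul_left _).congr_fun fun i => ?_
  rw [div_pow]
  field_simp
  ring

theorem stmt_11_general (ζ : ℝ) (hζ : 0 < ζ) (k : ℕ) (hk : 1 ≤ k)
    (n : ℕ) (lam : ℝ) (hlam : 0 < lam) :
    lam ^ (n + 1) / (n.factorial : ℝ) *
      ∑' j : ℕ, |iteratedDeriv n (fun x : ℝ => (ζ ^ k / (x + ζ) ^ k) ^ (j + 1)) lam| ≤ ζ := by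
  let f (m : ℕ) : ℝ := ζ ^ m * m.ascFactorial n / (lam + ζ) ^ (m + n)
  have hsum : HasSum (fun i => f (i + 1)) (n ! * ζ / lam ^ (n + 1)) :=
    hasSum_pow_mul_ascFactorial_div_add_pow n hζ hlam
  have hterm (j : ℕ) :
      |iteratedDeriv n (fun x : ℝ => (ζ ^ k / (x + ζ) ^ k) ^ (j + 1)) lam| = f (k * (j + 1)) := by
    simp only [div_pow, ← pow_mul]
    exact abs_iteratedDeriv_pow_div_add_pow (k * (j + 1)) n hζ.le (by linarith)
  calc lam ^ (n + 1) / (n.factorial : ℝ) *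
        ∑' j : ℕ, |iteratedDeriv n (fun x : ℝ => (ζ ^ k / (x + ζ) ^ k) ^ (j + 1)) lam|
      = lam ^ (n + 1) / n ! * ∑' j, f (k * (j + 1)) := by simp only [hterm]
    _ ≤ lam ^ (n + 1) / n ! * ∑' i, f (i + 1) := by
        have hle := tsum_comp_mul_succ_le hsum.summable (fun m => by positivity) hk
        gcongr
    _ = ζ := by
        rw [hsum.tsum_eq]
        field_simp

/-- for `φ(λ) = ζ^k/(λ+ζ)^k`, one has
`(λ^{n+1}/n!) ∑_{ℓ≥1} |d^n/dλ^n φ(λ)^ℓ| ≤ ζ` for all `n ≥ 1`, `λ > 0`.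
The sum over `ℓ ≥ 1` is written with `ℓ = j + 1`, `j : ℕ`. -/
theorem stmt_11 (ζ : ℝ) (hζ : 0 < ζ) (k : ℕ) (hk : 1 ≤ k)
    (n : ℕ) (hn : 1 ≤ n) (lam : ℝ) (hlam : 0 < lam) :
    lam ^ (n + 1) / (n.factorial : ℝ) *
      ∑' j : ℕ, |iteratedDeriv n (fun x : ℝ => (ζ ^ k / (x + ζ) ^ k) ^ (j + 1)) lam| ≤ ζ :=
  stmt_11_general ζ hζ k hk n lam hlam
end

section
/- For $t \ge 0$ define the sequence $y(t) \in \ell^1(\mathbb{Z}_{\ge 0})$ by $y_k(t) = \frac{t^k}{k!} - \frac{t^{k+1}}{(k+1)!}$. Then there exists a constant $C > 0$ such that $e^{-t}\big(1 + \|y(t)\|_{\ell^1}\big) \le C t^{-1/2}$ for all $t \ge 2$. -/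
/-!
The terms `t^k/k!` increase up to `k = ⌊t⌋₊` and decrease afterwards, so the series of the
`|y_k(t)|` telescopes on both sides of the mode `n = ⌊t⌋₊` and `1 + ‖y(t)‖₁ = 2 tⁿ/n!`.
Since `x ↦ xⁿ e^{-x}` is maximal at `x = n`, Stirling's bound `n! ≥ √(2πn) (n/e)ⁿ` gives
`e^{-t} tⁿ/n! ≤ 1/√(2πn)`, and `2πn ≥ t` once `t ≥ 1`.
-/

open Real Filter Topology Finset Nat

theorem hasSum_sub_succ_of_antitone {b : ℕ → ℝ} {l : ℝ} (hb : Antitone b)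
    (hlim : Tendsto b atTop (𝓝 l)) : HasSum (fun k ↦ b k - b (k + 1)) (b 0 - l) := by
  have hnonneg : ∀ k, 0 ≤ b k - b (k + 1) := fun k ↦ sub_nonneg.2 (hb k.le_succ)
  rw [hasSum_iff_tendsto_nat_of_nonneg hnonneg]
  simp only [sum_range_sub']
  exact hlim.const_sub (b 0)

theorem hasSum_abs_sub_succ_of_unimodal {a : ℕ → ℝ} {n : ℕ}
    (hmono : ∀ k < n, a k ≤ a (k + 1)) (hanti : ∀ k, n ≤ k → a (k + 1) ≤ a k)
    (hlim : Tendsto a atTop (𝓝 0)) :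
    HasSum (fun k ↦ |a k - a (k + 1)|) (2 * a n - a 0) := by
  have hhead : ∑ k ∈ range n, |a k - a (k + 1)| = a n - a 0 := by
    rw [← sum_range_sub]
    refine sum_congr rfl fun k hk ↦ ?_
    rw [abs_sub_comm, abs_of_nonneg (sub_nonneg.2 (hmono k (mem_range.1 hk)))]
  have htail : HasSum (fun k ↦ |a (k + n) - a (k + n + 1)|) (a n) := by
    have hb : Antitone fun k ↦ a (k + n) :=
      antitone_nat_of_succ_le fun k ↦ by rw [add_right_comm]; exact hanti (k + n) (by omega)
    have := hasSum_sub_succ_of_antitone hb (hlim.comp (tendsto_add_atTop_nat n))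
    simp only [zero_add, sub_zero, add_right_comm _ 1 n] at this
    exact this.congr_fun fun k ↦ abs_of_nonneg (sub_nonneg.2 (hanti (k + n) (by omega)))
  have := HasSum.sum_range_add (f := fun k ↦ |a k - a (k + 1)|) htail
  rwa [hhead, sub_add_eq_add_sub, ← two_mul] at this

theorem pow_succ_div_factorial_succ (t : ℝ) (k : ℕ) :
    t ^ (k + 1) / (k + 1)! = t ^ k / k ! * (t / (k + 1)) := by
  rw [factorial_succ, pow_succ, cast_mul]
  push_cast
  field_simp

theorem one_add_tsum_abs_sub_pow_div_factorial {t : ℝ} (ht : 0 ≤ t) :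
    1 + ∑' k : ℕ, |t ^ k / (k ! : ℝ) - t ^ (k + 1) / ((k + 1)! : ℝ)| =
      2 * t ^ ⌊t⌋₊ / (⌊t⌋₊ ! : ℝ) := by
  have hmono : ∀ k < ⌊t⌋₊, t ^ k / (k ! : ℝ) ≤ t ^ (k + 1) / ((k + 1)! : ℝ) := by
    intro k hk
    have : (k : ℝ) + 1 ≤ t := by exact_mod_cast (le_floor_iff ht).1 hk
    rw [pow_succ_div_factorial_succ]
    exact le_mul_of_one_le_right (by positivity) ((one_le_div (by positivity)).2 this)
  have hanti : ∀ k, ⌊t⌋₊ ≤ k → t ^ (k + 1) / ((k + 1)! : ℝ) ≤ t ^ k / (k ! : ℝ) := by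
    intro k hk
    have : t ≤ (k : ℝ) + 1 := (lt_floor_add_one t).le.trans (by exact_mod_cast Nat.succ_le_succ hk)
    rw [pow_succ_div_factorial_succ]
    exact mul_le_of_le_one_right (by positivity) ((div_le_one (by positivity)).2 this)
  rw [(hasSum_abs_sub_succ_of_unimodal hmono hanti
    (FloorSemiring.tendsto_pow_div_factorial_atTop t)).tsum_eq]
  simp only [pow_zero, factorial_zero, cast_one, div_one]
  ring

theorem pow_mul_exp_neg_le (n : ℕ) {t : ℝ} (ht : 0 ≤ t) :
    t ^ n * exp (-t) ≤ n ^ n * exp (-n) := by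
  rcases n.eq_zero_or_pos with rfl | hn
  · simpa using ht
  have hn' : (0 : ℝ) < n := cast_pos.2 hn
  have hexp : t ^ n ≤ n ^ n * exp (t - n) := calc
    t ^ n = n ^ n * (t / n) ^ n := by rw [div_pow, mul_div_cancel₀ _ (by positivity)]
    _ ≤ n ^ n * exp (t / n - 1) ^ n := by
      gcongr
      linarith [add_one_le_exp (t / n - 1)]
    _ = n ^ n * exp (t - n) := by
      rw [← exp_nat_mul, mul_sub, mul_div_cancel₀ _ hn'.ne', mul_one]
  calc t ^ n * exp (-t) ≤ n ^ n * exp (t - n) * exp (-t) := by gcongr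
    _ = n ^ n * exp (-n) := by rw [mul_assoc, ← exp_add]; ring_nf

theorem pow_mul_exp_neg_div_factorial_le {n : ℕ} (hn : n ≠ 0) {t : ℝ} (ht : 0 ≤ t) :
    t ^ n * exp (-t) / n ! ≤ (√(2 * π * n))⁻¹ := by
  have hstirling : √(2 * π * n) * (n ^ n * exp (-n)) ≤ n ! := by
    have := Stirling.le_factorial_stirling n
    rwa [div_pow, div_eq_mul_inv, ← exp_nat_mul, mul_one, ← exp_neg] at this
  have hsqrt : 0 < √(2 * π * n) := by
    have : (0 : ℝ) < n := by exact_mod_cast Nat.pos_of_ne_zero hn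
    positivity
  rw [div_le_iff₀ (by positivity), inv_mul_eq_div, le_div_iff₀ hsqrt, mul_comm]
  exact (mul_le_mul_of_nonneg_left (pow_mul_exp_neg_le n ht) hsqrt.le).trans hstirling

/-- with `y_k(t) = t^k/k! - t^{k+1}/(k+1)!`, there is `C > 0` with
`e^{-t}(1 + ∑_k |y_k(t)|) ≤ C t^{-1/2}` for all `t ≥ 2`. -/
theorem stmt_17 :
    ∃ C : ℝ, 0 < C ∧ ∀ t : ℝ, 2 ≤ t →
      Real.exp (-t) *
        (1 + ∑' k : ℕ, |t ^ k / (k.factorial : ℝ) - t ^ (k + 1) / ((k + 1).factorial : ℝ)|)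
        ≤ C * t ^ (-(1 / 2) : ℝ) := by
  refine ⟨2, two_pos, fun t ht ↦ ?_⟩
  have ht0 : 0 ≤ t := by linarith
  set n := ⌊t⌋₊
  have hn : 1 ≤ n := le_floor (by norm_num; linarith)
  have htn : t ≤ 2 * π * n := by
    have : t < n + 1 := lt_floor_add_one t
    have : (1 : ℝ) ≤ n := by exact_mod_cast hn
    nlinarith [pi_gt_three]
  rw [one_add_tsum_abs_sub_pow_div_factorial ht0, rpow_neg ht0, ← sqrt_eq_rpow]
  calc exp (-t) * (2 * t ^ n / n !) = 2 * (t ^ n * exp (-t) / n !) := by ring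
    _ ≤ 2 * (√(2 * π * n))⁻¹ := by gcongr; exact pow_mul_exp_neg_div_factorial_le (by omega) ht0
    _ ≤ 2 * (√t)⁻¹ := by gcongr
end
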